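/- Consider the free graded Z-module C with generators a1, a2, a3 in degree 1, b1, b2, b3 in degree 0, b4 in degree k+1, b5 in degree k-1, b6 in degree -k, b7 in degree k, with differential d(a1) = 0, d(a2) = b1 + b2 + (1-m)b3, d(a3) = b1 + b3, d(b7) = (m-1)b5, d(b4) = (-1)^k b6, and d = 0 on the remaining generators, where m is an integer with m ∉ {0,1,2} and k is an integer. Then the homology of C is Z in degree 1 (class of a1), Z in degree 0 (class of b1 = -[b3]), Z/(m-1)Z in degree k-1 (class of b5), and zero in all other degrees. -/

import Mathlib

/-- Graded piece of `ι → ℤ` spanned by the standard basis vectors of a given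
degree. -/
def gradedPiece {ι : Type} [DecidableEq ι] (deg : ι → ℤ) (j : ℤ) :
    Submodule ℤ (ι → ℤ) :=
  Submodule.span ℤ {v | ∃ g, deg g = j ∧ v = Pi.single g 1}

/-- The degree-`j` homology of a homogeneous differential `D` on a graded
module, i.e. `(ker D ∩ P_j) / (im D ∩ P_j)`. -/
def homologyAt {R V : Type*} [Ring R] [AddCommGroup V] [Module R V]
    (D : V →ₗ[R] V) (P : Submodule R V) : Type _ :=
  ↥(LinearMap.ker D ⊓ P) ⧸
    Submodule.comap (LinearMap.ker D ⊓ P).subtype (LinearMap.range D ⊓ P)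

noncomputable instance {R V : Type*} [Ring R] [AddCommGroup V] [Module R V]
    (D : V →ₗ[R] V) (P : Submodule R V) : AddCommGroup (homologyAt D P) :=
  Submodule.Quotient.addCommGroup _

noncomputable instance {R V : Type*} [Ring R] [AddCommGroup V] [Module R V]
    (D : V →ₗ[R] V) (P : Submodule R V) : Module R (homologyAt D P) :=
  Submodule.Quotient.module _

/-- Generators `a1, a2, a3` (indices 0-2), `b1, b2, b3` (indices 3-5),
`b4` (index 6, degree `k+1`), `b5` (index 7, degree `k-1`),
`b6` (index 8, degree `-k`), `b7` (index 9, degree `k`). -/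
def deg14 (k : ℤ) : Fin 10 → ℤ := ![1, 1, 1, 0, 0, 0, k + 1, k - 1, -k, k]

/-- Differential: `d a1 = 0`, `d a2 = b1 + b2 + (1-m) b3`, `d a3 = b1 + b3`,
`d b7 = (m-1) b5`, `d b4 = (-1)^k b6`, zero on the remaining generators. -/
noncomputable def d14 (m k : ℤ) : (Fin 10 → ℤ) →ₗ[ℤ] (Fin 10 → ℤ) :=
  (Pi.basisFun ℤ (Fin 10)).constr ℤ
    ![0,
      Pi.single 3 1 + Pi.single 4 1 + (1 - m) • Pi.single 5 1,
      Pi.single 3 1 + Pi.single 5 1,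
      0, 0, 0,
      (((-1 : ℤˣ) ^ k : ℤˣ) : ℤ) • Pi.single 8 1,
      0, 0,
      (m - 1) • Pi.single 7 1]

/-!
The differential is injective on `a2, a3, b4, b7` (on `b7` because `m ≠ 1`, on `b4` because
`(-1)^k` is a unit), so the degree-`j` cycles are the degree-`j` combinations of
`a1, b1, b2, b3, b5, b6`. On them, `x ↦ (x_{a1} + x_{b1} - m x_{b2} - x_{b3}, x_{b5} mod (m - 1))`,
keeping the first entry when `j ∈ {0, 1}` and the second when `j = k - 1`, is onto and its kernel
is exactly the boundaries: `d a2` and `d a3` span the kernel of `b1 - m b2 - b3` in degree 0,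
the boundaries in `b5` are the multiples of `(m - 1) b5`, and `b6 = ±d b4`.
-/

theorem mem_gradedPiece_iff {ι : Type} [Finite ι] [DecidableEq ι] {deg : ι → ℤ} {j : ℤ}
    {x : ι → ℤ} : x ∈ gradedPiece deg j ↔ ∀ g, deg g ≠ j → x g = 0 := by
  have hspan : {v : ι → ℤ | ∃ g, deg g = j ∧ v = Pi.single g 1} =
      Pi.basisFun ℤ ι '' {g | deg g = j} := by
    ext v
    simp [eq_comm]
  rw [gradedPiece, hspan, Module.Basis.mem_span_image]
  simp [Set.subset_def, not_imp_comm]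

theorem single_mem_gradedPiece {ι : Type} [Finite ι] [DecidableEq ι] {deg : ι → ℤ} {j : ℤ}
    {g : ι} {c : ℤ} (h : deg g = j ∨ c = 0) : Pi.single g c ∈ gradedPiece deg j := by
  rw [mem_gradedPiece_iff]
  intro g' hg'
  rcases eq_or_ne g' g with rfl | hne
  · simpa [hg'] using h
  · exact Pi.single_eq_of_ne hne _

theorem homologyAt.nonempty_linearEquiv {R V T : Type*} [Ring R] [AddCommGroup V] [Module R V]
    [AddCommGroup T] [Module R T] {D : V →ₗ[R] V} {P : Submodule R V} (f : V →ₗ[R] T)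
    (hker : ∀ x ∈ LinearMap.ker D ⊓ P, f x = 0 ↔ x ∈ LinearMap.range D ⊓ P)
    (hsurj : ∀ t, ∃ x ∈ LinearMap.ker D ⊓ P, f x = t) :
    Nonempty (homologyAt D P ≃ₗ[R] T) := by
  let g := f.domRestrict (LinearMap.ker D ⊓ P)
  have hg : Function.Surjective g := fun t =>
    let ⟨x, hx, hfx⟩ := hsurj t; ⟨⟨x, hx⟩, hfx⟩
  have hkerg : Submodule.comap (LinearMap.ker D ⊓ P).subtype (LinearMap.range D ⊓ P) =
      LinearMap.ker g := by
    ext x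
    exact (hker x.1 x.2).symm
  exact ⟨(Submodule.quotEquivOfEq _ _ hkerg).trans (g.quotKerEquivOfSurjective hg)⟩

theorem Fin.apply_eq_sum_of_le_one {M : Type*} [AddCommMonoid M] {n : ℕ} (hn : n ≤ 1)
    (u : Fin n → M) (i : Fin n) : u i = ∑ i, u i :=
  haveI := Fin.subsingleton_iff_le_one.mpr hn
  (Fintype.sum_subsingleton u i).symm

section Link

variable {m k : ℤ}

theorem d14_apply (x : Fin 10 → ℤ) :
    d14 m k x = Pi.single 3 (x 1 + x 2) + Pi.single 4 (x 1)
      + Pi.single 5 ((1 - m) * x 1 + x 2) + Pi.single 7 ((m - 1) * x 9)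
      + Pi.single 8 ((((-1 : ℤˣ) ^ k : ℤˣ) : ℤ) * x 6) := by
  ext g
  fin_cases g <;> simp [d14, Fin.sum_univ_succ] <;> ring

theorem mem_ker_d14 (hm1 : m ≠ 1) {x : Fin 10 → ℤ} :
    x ∈ LinearMap.ker (d14 m k) ↔ x 1 = 0 ∧ x 2 = 0 ∧ x 6 = 0 ∧ x 9 = 0 := by
  have hm : m - 1 ≠ 0 := sub_ne_zero.mpr hm1
  simp only [LinearMap.mem_ker, d14_apply, funext_iff, Fin.forall_fin_succ]
  simp only [Pi.add_apply, Pi.zero_apply, Pi.single_apply, Fin.succ_zero_eq_one,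
    Fin.succ_one_eq_two, Fin.reduceSucc, Fin.reduceEq, mul_eq_zero, hm, Units.ne_zero, if_true,
    if_false, add_zero, zero_add, false_or, IsEmpty.forall_iff, and_true, true_and]
  constructor
  · rintro ⟨h12, h1, -, h9, h6⟩
    exact ⟨h1, by omega, h6, h9⟩
  · rintro ⟨h1, h2, h6, h9⟩
    simp [h1, h2, h6, h9]

theorem mem_range_d14 {x : Fin 10 → ℤ} :
    x ∈ LinearMap.range (d14 m k) ↔
      x 0 = 0 ∧ x 1 = 0 ∧ x 2 = 0 ∧ x 6 = 0 ∧ x 9 = 0 ∧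
      x 5 = x 3 - m * x 4 ∧ (m - 1) ∣ x 7 := by
  constructor
  · rintro ⟨y, rfl⟩
    simp only [d14_apply, Pi.add_apply, Pi.single_apply, Fin.reduceEq, if_true, if_false,
      add_zero, zero_add, dvd_mul_right, and_true, true_and]
    ring
  · rintro ⟨h0, h1, h2, h6, h9, h5, t, h7⟩
    have hsign : (((-1 : ℤˣ) ^ k : ℤˣ) : ℤ) * (((-1 : ℤˣ) ^ k : ℤˣ) : ℤ) = 1 := by
      rw [← Units.val_mul, Int.units_mul_self, Units.val_one]
    refine ⟨Pi.single 1 (x 4) + Pi.single 2 (x 3 - x 4)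
      + Pi.single 6 ((((-1 : ℤˣ) ^ k : ℤˣ) : ℤ) * x 8) + Pi.single 9 t, ?_⟩
    ext g
    fin_cases g <;> simp [d14_apply, h0, h1, h2, h6, h9, h5, h7, ← mul_assoc, hsign]
    ring

theorem mem_gradedPiece_deg14 {j : ℤ} {x : Fin 10 → ℤ} :
    x ∈ gradedPiece (deg14 k) j ↔
      (j ≠ 1 → x 0 = 0 ∧ x 1 = 0 ∧ x 2 = 0) ∧
      (j ≠ 0 → x 3 = 0 ∧ x 4 = 0 ∧ x 5 = 0) ∧
      (j ≠ k + 1 → x 6 = 0) ∧ (j ≠ k - 1 → x 7 = 0) ∧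
      (j ≠ -k → x 8 = 0) ∧ (j ≠ k → x 9 = 0) := by
  simp only [mem_gradedPiece_iff, Fin.forall_fin_succ]
  simp only [deg14, Matrix.cons_val, Fin.succ_zero_eq_one, Fin.succ_one_eq_two, Fin.reduceSucc,
    IsEmpty.forall_iff, and_true, ne_comm]
  tauto

def lowDegreeCoord (m : ℤ) : (Fin 10 → ℤ) →ₗ[ℤ] ℤ :=
  let π (i : Fin 10) : (Fin 10 → ℤ) →ₗ[ℤ] ℤ := LinearMap.proj i
  π 0 + π 3 - m • π 4 - π 5

def homologyCoord14 (m k j : ℤ) : (Fin 10 → ℤ) →ₗ[ℤ]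
    (Fin ((if j = 1 then 1 else 0) + (if j = 0 then 1 else 0)) → ℤ) ×
      (Fin (if j = k - 1 then 1 else 0) → ZMod (m - 1).natAbs) :=
  (LinearMap.pi fun _ => lowDegreeCoord m).prod
    (LinearMap.pi fun _ => (Int.castAddHom _).toIntLinearMap ∘ₗ LinearMap.proj (7 : Fin 10))

theorem homologyCoord14_eq_zero_iff {j : ℤ} {x : Fin 10 → ℤ} (hx : x ∈ gradedPiece (deg14 k) j) :
    homologyCoord14 m k j x = 0 ↔ lowDegreeCoord m x = 0 ∧ (m - 1) ∣ x 7 := by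
  rw [mem_gradedPiece_deg14] at hx
  obtain ⟨h012, h345, -, h7, -, -⟩ := hx
  simp only [homologyCoord14, Prod.ext_iff, funext_iff]
  refine and_congr ?_ ?_
  · by_cases h1 : j = 1
    · simp [h1]
    by_cases h0 : j = 0
    · simp [h0]
    obtain ⟨hx0, -, -⟩ := h012 h1
    obtain ⟨hx3, hx4, hx5⟩ := h345 h0
    simp [h1, h0, lowDegreeCoord, hx0, hx3, hx4, hx5]
  · by_cases hk : j = k - 1
    · simp [hk, ZMod.intCast_zmod_eq_zero_iff_dvd]
    · simp [hk, h7 hk]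

theorem homologyCoord14_eq_zero_iff_mem_range (hm1 : m ≠ 1) {j : ℤ} {x : Fin 10 → ℤ}
    (hx : x ∈ LinearMap.ker (d14 m k) ⊓ gradedPiece (deg14 k) j) :
    homologyCoord14 m k j x = 0 ↔ x ∈ LinearMap.range (d14 m k) ⊓ gradedPiece (deg14 k) j := by
  obtain ⟨hker, hP⟩ := Submodule.mem_inf.mp hx
  rw [homologyCoord14_eq_zero_iff hP, Submodule.mem_inf, mem_range_d14, and_iff_left hP]
  obtain ⟨hx1, hx2, hx6, hx9⟩ := (mem_ker_d14 hm1).mp hker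
  have hx0345 : x 0 = 0 ∨ x 3 = 0 ∧ x 4 = 0 ∧ x 5 = 0 := by
    obtain ⟨h012, h345, -⟩ := mem_gradedPiece_deg14.mp hP
    by_cases h1 : j = 1
    · exact .inr (h345 (by omega))
    · exact .inl (h012 h1).1
  simp only [lowDegreeCoord, hx1, hx2, hx6, hx9, LinearMap.sub_apply, LinearMap.add_apply,
    LinearMap.smul_apply, LinearMap.proj_apply, smul_eq_mul, true_and]
  rcases hx0345 with hx0 | ⟨hx3, hx4, hx5⟩
  · simp only [hx0, true_and]
    exact and_congr ⟨fun h => by linarith, fun h => by linarith⟩ Iff.rfl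
  · simp only [hx3, hx4, hx5, mul_zero, sub_zero, add_zero, true_and]

theorem exists_cycle_homologyCoord14_eq (hm1 : m ≠ 1) {j : ℤ} :
    ∀ t, ∃ x ∈ LinearMap.ker (d14 m k) ⊓ gradedPiece (deg14 k) j, homologyCoord14 m k j x = t := by
  rintro ⟨u, v⟩
  set a := ∑ i, u i
  set c := ∑ i, ((v i).cast : ℤ)
  have hu (i) : u i = a := Fin.apply_eq_sum_of_le_one (by split_ifs <;> omega) u i
  have hv (i) : v i = c := by
    simp only [c, Int.cast_sum, ZMod.intCast_zmod_cast]
    exact Fin.apply_eq_sum_of_le_one (by split_ifs <;> omega) v i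
  refine ⟨Pi.single (if j = 1 then 0 else 3) a + Pi.single 7 c, ⟨?_, ?_⟩, ?_⟩
  · rw [SetLike.mem_coe, mem_ker_d14 hm1]
    split_ifs <;> simp
  · refine Submodule.add_mem _ (single_mem_gradedPiece ?_) (single_mem_gradedPiece ?_)
    · by_cases h1 : j = 1
      · simp [h1, deg14]
      by_cases h0 : j = 0
      · simp [h0, deg14]
      · exact .inr (Finset.sum_eq_zero fun i _ => absurd i.isLt (by simp [h1, h0]))
    · by_cases hk : j = k - 1
      · simp [hk, deg14]
      · exact .inr (Finset.sum_eq_zero fun i _ => absurd i.isLt (by simp [hk]))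
  · refine Prod.ext (funext fun i => ?_) (funext fun i => ?_)
    · simp only [homologyCoord14, lowDegreeCoord, hu i]
      split_ifs <;> simp
    · split_ifs <;> simp [homologyCoord14, hv]

end Link

theorem stmt_14_general (m k : ℤ) (hm1 : m ≠ 1) :
    ∀ j : ℤ,
      Nonempty (homologyAt (d14 m k) (gradedPiece (deg14 k) j) ≃ₗ[ℤ]
        ((Fin ((if j = 1 then 1 else 0) + (if j = 0 then 1 else 0)) → ℤ) ×
         (Fin (if j = k - 1 then 1 else 0) → ZMod (m - 1).natAbs))) := fun j =>
  homologyAt.nonempty_linearEquiv (homologyCoord14 m k j)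
    (fun _ hx => homologyCoord14_eq_zero_iff_mem_range hm1 hx)
    (exists_cycle_homologyCoord14_eq hm1)

/-- Bilinearized LCH of the trefoil-unknot link `Λ_{m,k}` (Section 4.4),
`m ∉ {0,1,2}`: homology is `ℤ` in degree 1 (class of `a1`), `ℤ` in degree 0
(class of `b1 = -[b3]`), `ℤ/(m-1)ℤ` in degree `k-1` (class of `b5`), zero in
all other degrees. -/
theorem stmt_14 (m k : ℤ) (hm0 : m ≠ 0) (hm1 : m ≠ 1) (hm2 : m ≠ 2) :
    ∀ j : ℤ,
      Nonempty (homologyAt (d14 m k) (gradedPiece (deg14 k) j) ≃ₗ[ℤ]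
        ((Fin ((if j = 1 then 1 else 0) + (if j = 0 then 1 else 0)) → ℤ) ×
         (Fin (if j = k - 1 then 1 else 0) → ZMod (m - 1).natAbs))) :=
  stmt_14_general m k hm1
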